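/- arXiv:2401.12113 — 4 statements merged into one kernel-verified Lean document; each statement's English description precedes it below -/
import Mathlib

section
/- Let n ∈ ℕ, let f(x) = m₁x₁ + ⋯ + mₙxₙ + b with integer coefficients m₁,…,mₙ, b, and assume m₁ = max_i |m_i| (in particular m₁ ≥ 1 and m₁ ≥ |m_i| for all i). Let f∘(x) = (m₁−1)x₁ + m₂x₂ + ⋯ + mₙxₙ + b. Then for all x ∈ [0,1]ⁿ, σ(f(x)) = (σ(f∘(x)) ⊕ x₁) ⊙ σ(f∘(x) + 1), where σ(t) = min(1, max(0, t)), a ⊕ b = min(1, a+b), and a ⊙ b = max(0, a+b−1). -/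
set_option maxHeartbeats 4000000 in
lemma helper7 (g t : ℝ) (h0 : 0 ≤ t) (h1 : t ≤ 1) :
    min 1 (max 0 (g + t)) =
      max 0 ((min 1 ((min 1 (max 0 g)) + t)) + (min 1 (max 0 (g + 1))) - 1) := by
  rcases le_total g (-1) with h | h <;> rcases le_total g 0 with h' | h' <;>
    rcases le_total g 1 with h'' | h'' <;>
    [skip; skip; skip; skip; skip; skip; skip; skip] <;>
    (simp only [min_def, max_def]; split_ifs <;> linarith)

theorem stmt_7 (n : ℕ) (hn : 0 < n) (m : Fin n → ℤ) (b : ℤ)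
    (hmax : ∀ i, |m i| ≤ m ⟨0, hn⟩) (hone : 1 ≤ m ⟨0, hn⟩)
    (x : Fin n → ℝ) (hx : ∀ i, x i ∈ Set.Icc (0:ℝ) 1) :
    min 1 (max 0 ((∑ i, (m i : ℝ) * x i) + b)) =
      max 0 ((min 1 ((min 1 (max 0 ((∑ i, (m i : ℝ) * x i) - x ⟨0, hn⟩ + b))) + x ⟨0, hn⟩))
        + (min 1 (max 0 ((∑ i, (m i : ℝ) * x i) - x ⟨0, hn⟩ + b + 1))) - 1) := by
  have hx0 := hx ⟨0, hn⟩
  have := helper7 ((∑ i, (m i : ℝ) * x i) - x ⟨0, hn⟩ + b) (x ⟨0, hn⟩) hx0.1 hx0.2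
  have heq : (∑ i, (m i : ℝ) * x i) - x ⟨0, hn⟩ + b + x ⟨0, hn⟩
      = (∑ i, (m i : ℝ) * x i) + b := by ring
  rw [heq] at this
  exact this
end

section
/- Let n ∈ ℕ, let f(x) = m₁x₁ + ⋯ + mₙxₙ + b with real coefficients, let m ∈ (0,1], let i ∈ {1,…,n}, and let f∘(x) = f(x) − m·x_i. Then for all x ∈ [0,1]ⁿ, σ(f(x)) = (σ(f∘(x)) ⊕ (m·x_i)) ⊙ σ(f∘(x) + 1), where σ(t) = min(1, max(0, t)), a ⊕ b = min(1, a+b), and a ⊙ b = max(0, a+b−1). -/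
set_option maxHeartbeats 1000000

lemma key_8 (t s : ℝ) (hs0 : 0 ≤ s) (hs1 : s ≤ 1) :
    min 1 (max 0 (t + s)) =
      max 0 ((min 1 ((min 1 (max 0 t)) + s)) + (min 1 (max 0 (t + 1))) - 1) := by
  simp only [min_def, max_def]
  split_ifs <;> linarith

theorem stmt_8 (n : ℕ) (m : Fin n → ℝ) (b : ℝ) (c : ℝ) (hc : c ∈ Set.Ioc (0:ℝ) 1)
    (i : Fin n) (x : Fin n → ℝ) (hx : ∀ j, x j ∈ Set.Icc (0:ℝ) 1) :
    min 1 (max 0 ((∑ j, m j * x j) + b)) =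
      max 0 ((min 1 ((min 1 (max 0 ((∑ j, m j * x j) + b - c * x i))) + c * x i))
        + (min 1 (max 0 ((∑ j, m j * x j) + b - c * x i + 1))) - 1) := by
  obtain ⟨hc0, hc1⟩ := hc
  obtain ⟨hx0, hx1⟩ := hx i
  have hs0 : 0 ≤ c * x i := mul_nonneg hc0.le hx0
  have hs1 : c * x i ≤ 1 := mul_le_one₀ hc1 hx0 hx1
  have h := key_8 ((∑ j, m j * x j) + b - c * x i) (c * x i) hs0 hs1
  convert h using 3 <;> ring
end

section
/- Let g(x) = max(0, 2x) − 2·max(0, 2x−1) on [0,1], and let g_s be the s-fold composition of g. Define the shallow representation: for x ∈ [0,1], h_s(x) = Σ_{j=0}^{2^s−1} c_j · σ(2^s x − j), where c_j = (−1)^j for j = 0, ..., 2^s−1, and σ(t) = min(1, max(0, t)). Then h_s(x) = g_s(x) for all x ∈ [0,1]. -/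
lemma sig_one_add (t : ℝ) : min 1 (max 0 (1+t)) = 1 - min 1 (max 0 (-t)) := by
  simp only [min_def, max_def]
  split_ifs <;> linarith

lemma tail_zero (m : ℕ) (c : ℝ) (hc : c ≤ m) :
    ∑ j ∈ Finset.range (m + m), (-1:ℝ)^j * min 1 (max 0 (c - j)) =
    ∑ j ∈ Finset.range m, (-1:ℝ)^j * min 1 (max 0 (c - j)) := by
  rw [Finset.sum_range_add]
  have h2 : ∑ j ∈ Finset.range m, (-1:ℝ)^(m+j) * min 1 (max 0 (c - (m+j : ℕ))) = 0 := by
    apply Finset.sum_eq_zero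
    intro i _
    have : max 0 (c - (m+i : ℕ)) = 0 := by
      apply max_eq_left
      push_cast
      have : (0:ℝ) ≤ i := by positivity
      linarith
    rw [this]
    simp
  rw [h2, add_zero]

lemma key (m : ℕ) (hm : 0 < m) (x : ℝ) (hx0 : 0 ≤ x) (hx1 : x ≤ 1) :
    ∑ j ∈ Finset.range (m + m), (-1:ℝ)^j * min 1 (max 0 ((m + m : ℕ) * x - j))
    = ∑ j ∈ Finset.range m, (-1:ℝ)^j *
        min 1 (max 0 ((m:ℝ) * (max 0 (2*x) - 2*max 0 (2*x-1)) - j)) := by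
  have hmr : (0:ℝ) ≤ m := by positivity
  rcases le_total x (1/2) with h | h
  · have hg : max 0 (2*x) - 2*max 0 (2*x-1) = 2*x := by
      rw [max_eq_right (by linarith), max_eq_left (by linarith)]; ring
    rw [hg]
    have hc : ((m + m : ℕ) : ℝ) * x ≤ (m:ℝ) := by push_cast; nlinarith
    rw [tail_zero _ _ hc]
    apply Finset.sum_congr rfl
    intro j _
    have harg : ((m + m : ℕ) : ℝ) * x - (j:ℝ) = (m:ℝ) * (2*x) - j := by
      push_cast; ring
    rw [harg]
  · have hg : max 0 (2*x) - 2*max 0 (2*x-1) = 2 - 2*x := by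
      rw [max_eq_right (by linarith), max_eq_right (by linarith)]; ring
    rw [hg]
    have hrefl := Finset.sum_range_reflect
      (fun j => (-1:ℝ)^j * min 1 (max 0 (((m + m : ℕ):ℝ) * x - j))) (m + m)
    rw [← hrefl]
    have hstep : ∀ j ∈ Finset.range (m + m),
        (-1:ℝ)^(m + m - 1 - j) * min 1 (max 0 (((m + m : ℕ):ℝ) * x - (m + m - 1 - j : ℕ)))
        = (-1:ℝ)^j * min 1 (max 0 ((((m + m : ℕ):ℝ) - ((m + m : ℕ):ℝ) * x) - j))
            - (-1:ℝ)^j := by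
      intro j hj
      rw [Finset.mem_range] at hj
      have hj1 : 1 + j ≤ m + m := by omega
      have hcast : ((m + m - 1 - j : ℕ) : ℝ) = ((m + m : ℕ):ℝ) - 1 - j := by
        rw [Nat.sub_sub, Nat.cast_sub hj1]
        push_cast; ring
      have hsign : (-1:ℝ)^(m + m - 1 - j) = -(-1:ℝ)^j := by
        have hadd : m + m - 1 - j + j = m + m - 1 := by omega
        have h1 : (-1:ℝ)^(m + m - 1 - j) * (-1)^j = (-1)^(m + m - 1) := by
          rw [← pow_add, hadd]
        have hodd : Odd (m + m - 1) := ⟨m - 1, by omega⟩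
        rw [hodd.neg_one_pow] at h1
        have hj2 : (-1:ℝ)^j * (-1)^j = 1 := by
          rw [← pow_add, ← two_mul, pow_mul]; norm_num
        linear_combination ((-1:ℝ)^j) * h1 - ((-1:ℝ)^(m + m - 1 - j)) * hj2
      rw [hcast, hsign]
      have harg : ((m + m : ℕ):ℝ) * x - (((m + m : ℕ):ℝ) - 1 - j)
          = 1 + ((j:ℝ) - (((m + m : ℕ):ℝ) - ((m + m : ℕ):ℝ) * x)) := by ring
      rw [harg, sig_one_add]
      have h2 : -((j:ℝ) - (((m + m : ℕ):ℝ) - ((m + m : ℕ):ℝ) * x))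
          = (((m + m : ℕ):ℝ) - ((m + m : ℕ):ℝ) * x) - j := by ring
      rw [h2]
      ring
    rw [Finset.sum_congr rfl hstep, Finset.sum_sub_distrib]
    rw [neg_one_geom_sum, if_pos ⟨m, rfl⟩, sub_zero]
    have hc : ((m + m : ℕ):ℝ) - ((m + m : ℕ):ℝ) * x ≤ (m:ℝ) := by
      push_cast; nlinarith
    rw [tail_zero _ _ hc]
    apply Finset.sum_congr rfl
    intro j _
    have harg : ((m + m : ℕ):ℝ) - ((m + m : ℕ):ℝ) * x - (j:ℝ)
        = (m:ℝ) * (2 - 2*x) - j := by push_cast; ring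
    rw [harg]

theorem stmt_14 (s : ℕ) (hs : 1 ≤ s) (x : ℝ) (hx : x ∈ Set.Icc (0:ℝ) 1) :
    (∑ j ∈ Finset.range (2 ^ s), (-1 : ℝ) ^ j * min 1 (max 0 ((2:ℝ) ^ s * x - j))) =
      (fun y : ℝ => max 0 (2 * y) - 2 * max 0 (2 * y - 1))^[s] x := by
  clear hs
  induction s generalizing x with
  | zero =>
    obtain ⟨hx0, hx1⟩ := hx
    simp [min_eq_right hx1, max_eq_right hx0]
  | succ n ih =>
    obtain ⟨hx0, hx1⟩ := hx
    have hgx : max 0 (2*x) - 2*max 0 (2*x-1) ∈ Set.Icc (0:ℝ) 1 := by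
      rcases le_total x (1/2) with h | h
      · rw [max_eq_right (by linarith), max_eq_left (by linarith)]
        constructor <;> linarith
      · rw [max_eq_right (by linarith), max_eq_right (by linarith)]
        constructor <;> linarith
    have hk := key (2^n) (by positivity) x hx0 hx1
    have hpow : (2:ℕ)^(n+1) = 2^n + 2^n := by ring
    have hL : ∀ j : ℕ, (2:ℝ)^(n+1) * x - j = ((2^n + 2^n : ℕ):ℝ) * x - j := by
      intro j; push_cast; ring
    have hR : ∀ j : ℕ, ((2^n : ℕ):ℝ) * (max 0 (2*x) - 2*max 0 (2*x-1)) - j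
        = (2:ℝ)^n * (max 0 (2*x) - 2*max 0 (2*x-1)) - j := by
      intro j; push_cast; ring
    rw [hpow]
    calc ∑ j ∈ Finset.range (2^n + 2^n), (-1:ℝ)^j * min 1 (max 0 ((2:ℝ)^(n+1) * x - j))
        = ∑ j ∈ Finset.range (2^n + 2^n), (-1:ℝ)^j *
            min 1 (max 0 (((2^n + 2^n : ℕ):ℝ) * x - j)) := by
          apply Finset.sum_congr rfl; intro j _; rw [hL j]
      _ = ∑ j ∈ Finset.range (2^n), (-1:ℝ)^j *
            min 1 (max 0 (((2^n : ℕ):ℝ) * (max 0 (2*x) - 2*max 0 (2*x-1)) - j)) := hk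
      _ = ∑ j ∈ Finset.range (2^n), (-1:ℝ)^j *
            min 1 (max 0 ((2:ℝ)^n * (max 0 (2*x) - 2*max 0 (2*x-1)) - j)) := by
          apply Finset.sum_congr rfl; intro j _; rw [hR j]
      _ = (fun y : ℝ => max 0 (2 * y) - 2 * max 0 (2 * y - 1))^[n]
            (max 0 (2*x) - 2*max 0 (2*x-1)) := ih _ hgx
      _ = (fun y : ℝ => max 0 (2 * y) - 2 * max 0 (2 * y - 1))^[n+1] x := by
          rw [Function.iterate_succ_apply]
end

section
/- Let g(x) = 2x on [0, 1/2] and g(x) = 2 − 2x on (1/2, 1], and let g_s be its s-fold self-composition. Then g_s has exactly 2^s − 1 interior breakpoints, located at the points k/2^s for k = 1, …, 2^s − 1, and g_s(k/2^s) = 0 for even k and g_s(k/2^s) = 1 for odd k. -/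
noncomputable def hatFn : ℝ → ℝ := fun x => if x ≤ 1/2 then 2 * x else 2 - 2 * x

/-!
On `[k / 2^s, (k + 1) / 2^s]` the iterate `hatFn^[s]` is the affine map `t ↦ t - k` (for even `k`)
or `t ↦ k + 1 - t` (for odd `k`) of `t = 2^s x`: applying `hatFn` once more folds each such piece at
its midpoint into two pieces of the next level. Hence `hatFn^[s]` is affine between consecutive
grid points, and at an interior grid point `k / 2^s` it is symmetric (a peak or a valley) without
being locally constant, which no affine map can be.
-/

open Set Topology

lemma hatFn_of_le_half {x : ℝ} (hx : x ≤ 1 / 2) : hatFn x = 2 * x := if_pos hx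

lemma hatFn_of_half_le {x : ℝ} (hx : 1 / 2 ≤ x) : hatFn x = 2 - 2 * x := by
  rcases hx.eq_or_lt with rfl | hlt
  · norm_num [hatFn]
  · exact if_neg (not_le.mpr hlt)

/-- The affine piece of `hatFn^[s]` on `[k / 2^s, (k + 1) / 2^s]`, in the variable `t = 2^s x`. -/
noncomputable def tentPiece (k : ℕ) (t : ℝ) : ℝ := if Even k then t - k else k + 1 - t

lemma tentPiece_nat_add (k : ℕ) (u : ℝ) :
    tentPiece k (k + u) = if Even k then u else 1 - u := by
  unfold tentPiece; split_ifs <;> ring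

lemma tentPiece_self (k : ℕ) : tentPiece k k = if Even k then 0 else 1 := by
  simpa using tentPiece_nat_add k 0

lemma tentPiece_pred_sub {k : ℕ} (hk : 1 ≤ k) (u : ℝ) :
    tentPiece (k - 1) (k - u) = tentPiece k (k + u) := by
  have hcast : ((k - 1 : ℕ) : ℝ) = k - 1 := by rw [Nat.cast_sub hk, Nat.cast_one]
  have hpar : Even (k - 1) ↔ ¬ Even k := by rw [Nat.even_sub hk]; simp
  unfold tentPiece
  by_cases hE : Even k
  · rw [if_neg (hpar.not.mpr (not_not.mpr hE)), if_pos hE, hcast]; ring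
  · rw [if_pos (hpar.mpr hE), if_neg hE, hcast]; ring

lemma hatFn_tentPiece_div_two {k : ℕ} {t : ℝ} (ht : 2 * t ∈ Icc (k : ℝ) (k + 1)) :
    hatFn (tentPiece (k / 2) t) = tentPiece k (2 * t) := by
  have hodd (j : ℕ) : ¬ Even (2 * j + 1) := Nat.not_even_iff_odd.mpr (odd_two_mul_add_one j)
  obtain ⟨j, rfl | rfl⟩ := Nat.even_or_odd' k
  all_goals
    obtain ⟨ht₁, ht₂⟩ := ht
    push_cast at ht₁ ht₂
    rcases Nat.even_or_odd j with hj | hj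
  · rw [show 2 * j / 2 = j by omega]
    simp only [tentPiece, hj, even_two_mul, if_true]
    rw [hatFn_of_le_half (by linarith)]; push_cast; ring
  · rw [show 2 * j / 2 = j by omega]
    simp only [tentPiece, Nat.not_even_iff_odd.mpr hj, even_two_mul, if_false, if_true]
    rw [hatFn_of_half_le (by linarith)]; push_cast; ring
  · rw [show (2 * j + 1) / 2 = j by omega]
    simp only [tentPiece, hj, hodd, if_true, if_false]
    rw [hatFn_of_half_le (by linarith)]; push_cast; ring
  · rw [show (2 * j + 1) / 2 = j by omega]
    simp only [tentPiece, Nat.not_even_iff_odd.mpr hj, hodd, if_false]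
    rw [hatFn_of_le_half (by linarith)]; push_cast; ring

lemma iterate_hatFn_eq_tentPiece {s k : ℕ} (hk : k < 2 ^ s) {x : ℝ}
    (hx : 2 ^ s * x ∈ Icc (k : ℝ) (k + 1)) : hatFn^[s] x = tentPiece k (2 ^ s * x) := by
  induction s generalizing k with
  | zero =>
    obtain rfl : k = 0 := by simpa using hk
    simp [tentPiece]
  | succ s ih =>
    have hx' : 2 ^ s * x ∈ Icc ((k / 2 : ℕ) : ℝ) ((k / 2 : ℕ) + 1) := by
      have h₁ : ((k / 2 : ℕ) : ℝ) * 2 ≤ k := by exact_mod_cast Nat.div_mul_le_self k 2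
      have h₂ : (k : ℝ) + 1 ≤ ((k / 2 : ℕ) + 1) * 2 := by
        exact_mod_cast (by omega : k + 1 ≤ (k / 2 + 1) * 2)
      rw [pow_succ] at hx
      constructor <;> nlinarith [hx.1, hx.2]
    rw [Function.iterate_succ_apply', ih (by rw [pow_succ] at hk; omega) hx',
      hatFn_tentPiece_div_two (by rw [← mul_assoc, ← pow_succ']; exact hx), ← mul_assoc,
      ← pow_succ']

def IsLocallyAffineAt (f : ℝ → ℝ) (x : ℝ) : Prop :=
  ∃ ε > (0 : ℝ), ∃ a b : ℝ, ∀ y ∈ Ioo (x - ε) (x + ε), f y = a * y + b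

lemma isLocallyAffineAt_of_mem_nhds {f : ℝ → ℝ} {x : ℝ} {U : Set ℝ} (hU : U ∈ 𝓝 x) (a b : ℝ)
    (hf : ∀ y ∈ U, f y = a * y + b) : IsLocallyAffineAt f x := by
  obtain ⟨ε, hε, hball⟩ := Metric.mem_nhds_iff.mp hU
  exact ⟨ε, hε, a, b, fun y hy => hf y (hball (by rwa [Real.ball_eq_Ioo]))⟩

/-- An affine map that is symmetric about `x` is constant. -/
lemma not_isLocallyAffineAt_of_symmetric {f : ℝ → ℝ} {x r : ℝ} (hr : 0 < r)
    (hsymm : ∀ δ ∈ Ioo 0 r, f (x - δ) = f (x + δ)) (hne : ∀ δ ∈ Ioo 0 r, f (x + δ) ≠ f x) :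
    ¬ IsLocallyAffineAt f x := by
  rintro ⟨ε, hε, a, b, hab⟩
  set δ := min (ε / 2) (r / 2)
  have hδ : δ ∈ Ioo 0 r := ⟨by positivity, (min_le_right _ _).trans_lt (by linarith)⟩
  have hδε : δ < ε := (min_le_left _ _).trans_lt (by linarith)
  have hl := hab (x - δ) ⟨by linarith, by linarith [hδ.1]⟩
  have hc := hab x ⟨by linarith, by linarith⟩
  have hr := hab (x + δ) ⟨by linarith [hδ.1], by linarith⟩
  have ha : a = 0 := by
    have := hsymm δ hδ
    rw [hl, hr] at this
    nlinarith [hδ.1]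
  exact hne δ hδ (by rw [hr, hc, ha]; ring)

lemma iterate_hatFn_isLocallyAffineAt {s k : ℕ} (hk : k < 2 ^ s) {x : ℝ}
    (hx : 2 ^ s * x ∈ Ioo (k : ℝ) (k + 1)) : IsLocallyAffineAt hatFn^[s] x := by
  have hcont : Continuous fun y : ℝ => 2 ^ s * y := continuous_const.mul continuous_id
  refine isLocallyAffineAt_of_mem_nhds ((isOpen_Ioo.preimage hcont).mem_nhds hx)
    (if Even k then 2 ^ s else -2 ^ s) (if Even k then -k else k + 1) fun y hy => ?_
  rw [iterate_hatFn_eq_tentPiece hk (Ioo_subset_Icc_self hy), tentPiece]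
  split_ifs <;> ring

lemma iterate_hatFn_div_pow {s k : ℕ} (hk : k < 2 ^ s) :
    hatFn^[s] ((k : ℝ) / 2 ^ s) = if Even k then 0 else 1 := by
  have hx : 2 ^ s * ((k : ℝ) / 2 ^ s) = k := mul_div_cancel₀ _ (by positivity)
  rw [iterate_hatFn_eq_tentPiece hk (by rw [hx]; exact ⟨le_rfl, by linarith⟩), hx, tentPiece_self]

lemma iterate_hatFn_not_isLocallyAffineAt {s k : ℕ} (hk₀ : 1 ≤ k) (hk : k < 2 ^ s) :
    ¬ IsLocallyAffineAt hatFn^[s] ((k : ℝ) / 2 ^ s) := by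
  have h2s : (0 : ℝ) < 2 ^ s := by positivity
  have hx : 2 ^ s * ((k : ℝ) / 2 ^ s) = k := mul_div_cancel₀ _ h2s.ne'
  have hscale : ∀ δ ∈ Ioo (0 : ℝ) (1 / 2 ^ s), 0 < 2 ^ s * δ ∧ 2 ^ s * δ < 1 := fun δ hδ =>
    ⟨by nlinarith [hδ.1], by nlinarith [hδ.2, mul_div_cancel₀ (1 : ℝ) h2s.ne']⟩
  have hright : ∀ δ ∈ Ioo 0 (1 / 2 ^ s),
      hatFn^[s] ((k : ℝ) / 2 ^ s + δ) = tentPiece k (k + 2 ^ s * δ) := fun δ hδ => by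
    obtain ⟨h₀, h₁⟩ := hscale δ hδ
    rw [iterate_hatFn_eq_tentPiece hk (by rw [mul_add, hx]; constructor <;> linarith), mul_add, hx]
  refine not_isLocallyAffineAt_of_symmetric (r := 1 / 2 ^ s) (by positivity)
    (fun δ hδ => ?_) (fun δ hδ => ?_)
  · obtain ⟨h₀, h₁⟩ := hscale δ hδ
    have hcast : ((k - 1 : ℕ) : ℝ) = k - 1 := by rw [Nat.cast_sub hk₀, Nat.cast_one]
    rw [hright δ hδ, iterate_hatFn_eq_tentPiece (k := k - 1) (by omega)
      (by rw [mul_sub, hx, hcast]; constructor <;> linarith), mul_sub, hx, tentPiece_pred_sub hk₀]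
  · have h₀ := (hscale δ hδ).1
    rw [hright δ hδ, iterate_hatFn_div_pow hk, tentPiece_nat_add]
    split_ifs <;> (intro h; linarith)

lemma mem_grid_of_not_isLocallyAffineAt {s : ℕ} {x : ℝ} (hx : x ∈ Ioo 0 1)
    (hbreak : ¬ IsLocallyAffineAt hatFn^[s] x) :
    ∃ k : ℕ, 1 ≤ k ∧ k ≤ 2 ^ s - 1 ∧ x = (k : ℝ) / 2 ^ s := by
  have h2s : (0 : ℝ) < 2 ^ s := by positivity
  have ht₀ : 0 < 2 ^ s * x := mul_pos h2s hx.1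
  have ht₁ : 2 ^ s * x < 2 ^ s := by nlinarith [hx.2]
  obtain ⟨k, hkt, htk⟩ : ∃ k : ℕ, (k : ℝ) ≤ 2 ^ s * x ∧ 2 ^ s * x < k + 1 :=
    ⟨_, Nat.floor_le ht₀.le, Nat.lt_floor_add_one _⟩
  have hk : k < 2 ^ s := by exact_mod_cast hkt.trans_lt ht₁
  rcases hkt.eq_or_lt with hkt | hkt
  · have hk₀ : 0 < k := by exact_mod_cast hkt ▸ ht₀
    exact ⟨k, hk₀, by omega, by rw [hkt]; field_simp⟩
  · exact absurd (iterate_hatFn_isLocallyAffineAt hk ⟨hkt, htk⟩) hbreak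

theorem stmt_18_general (s : ℕ) :
    ({x : ℝ | x ∈ Set.Ioo (0:ℝ) 1 ∧
        ¬ ∃ ε > (0:ℝ), ∃ a b : ℝ, ∀ y ∈ Set.Ioo (x - ε) (x + ε), hatFn^[s] y = a * y + b}
      = {x : ℝ | ∃ k : ℕ, 1 ≤ k ∧ k ≤ 2 ^ s - 1 ∧ x = (k : ℝ) / 2 ^ s}) ∧
    (∀ k : ℕ, 1 ≤ k → k ≤ 2 ^ s - 1 →
      hatFn^[s] ((k : ℝ) / 2 ^ s) = if Even k then 0 else 1) := by
  have hpos : 0 < 2 ^ s := Nat.two_pow_pos s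
  refine ⟨Set.ext fun x => ⟨fun ⟨hx, hbreak⟩ => mem_grid_of_not_isLocallyAffineAt hx hbreak, ?_⟩,
    fun k _ hk => iterate_hatFn_div_pow (by omega)⟩
  · rintro ⟨k, hk₀, hk, rfl⟩
    have h2s : (0 : ℝ) < 2 ^ s := by positivity
    have hks : (k : ℝ) < 2 ^ s := by exact_mod_cast (by omega : k < 2 ^ s)
    exact ⟨⟨by positivity, (div_lt_one h2s).mpr hks⟩,
      iterate_hatFn_not_isLocallyAffineAt hk₀ (by omega)⟩

theorem stmt_18 (s : ℕ) (hs : 1 ≤ s) :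
    ({x : ℝ | x ∈ Set.Ioo (0:ℝ) 1 ∧
        ¬ ∃ ε > (0:ℝ), ∃ a b : ℝ, ∀ y ∈ Set.Ioo (x - ε) (x + ε), hatFn^[s] y = a * y + b}
      = {x : ℝ | ∃ k : ℕ, 1 ≤ k ∧ k ≤ 2 ^ s - 1 ∧ x = (k : ℝ) / 2 ^ s}) ∧
    (∀ k : ℕ, 1 ≤ k → k ≤ 2 ^ s - 1 →
      hatFn^[s] ((k : ℝ) / 2 ^ s) = if Even k then 0 else 1) :=
  stmt_18_general s
end
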